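/- arXiv:2406.19919 — 7 statements merged into one kernel-verified Lean document; each statement's English description precedes it below -/
import Mathlib

section
/- For any scalar formal pseudo-differential series X = Σ_{i≤N} a_i D^i over a differential ring, the residue of X + X⁺ is a total derivative, i.e. res(X) + res(X⁺) ∈ Im D. -/
/-!
Formal pseudo-differential series over a commutative differential ring `(A, d)`.
A series `X = ∑_{i ≤ N} a_i D^i` is represented by its coefficient function
`ℤ → A` (the coefficient of `D^i`), with support bounded above.
-/

noncomputable section

/-- Generalized binomial coefficient `C(n, k)` for an integer `n`. -/
def gbinom (n : ℤ) (k : ℕ) : ℤ := Polynomial.eval n (descPochhammer ℤ k) / (k.factorial : ℤ)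

variable {A : Type*} [CommRing A]

/-- Support of a coefficient function is bounded above: genuine pseudo-differential series. -/
def PDSBdd (X : ℤ → A) : Prop := ∃ N : ℤ, ∀ i : ℤ, N < i → X i = 0

/-- Product of pseudo-differential series, induced by the extended Leibniz rule
`D^i ∘ a = ∑_{k ≥ 0} C(i,k) d^k(a) D^{i-k}`. -/
def pdsMul (d : A → A) (X Y : ℤ → A) : ℤ → A := fun n =>
  ∑ᶠ p : ℤ × ℕ, gbinom p.1 p.2 • (X p.1 * d^[p.2] (Y (n - p.1 + p.2)))

/-- The unit series `1 = D^0`. -/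
def pdsOne : ℤ → A := fun n => if n = 0 then 1 else 0

/-- Formal conjugate `X⁺ = ∑ (−D)^i ∘ a_i`. -/
def pdsConj (d : A → A) (X : ℤ → A) : ℤ → A := fun n =>
  ∑ᶠ k : ℕ, (((-1 : ℤˣ) ^ (n + (k : ℤ)) : ℤˣ) : ℤ) •
    (gbinom (n + k) k • d^[k] (X (n + k)))

/-- The residue: the coefficient of `D^{-1}`. -/
def pdsRes (X : ℤ → A) : A := X (-1)


/-!
In the scalar case the residue of `X⁺` is exactly `-res X`: for `i ≥ 0` the term `(-D)^i ∘ a_i`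
is a differential operator (its `D^{-1}`-coefficient carries `C(i, i + 1) = 0`), so only
`(-D)^{-1} ∘ a_{-1} = -a_{-1} D^{-1} + …` contributes to `D^{-1}`. Hence `res (X + X⁺) = 0 = d 0`.
-/

lemma gbinom_zero_right (n : ℤ) : gbinom n 0 = 1 := by
  simp [gbinom]

lemma gbinom_natCast_of_lt {m k : ℕ} (h : m < k) : gbinom m k = 0 := by
  simp [gbinom, descPochhammer_eval_coe_nat_of_lt h]

lemma pdsConj_neg_one (d : A → A) (X : ℤ → A) : pdsConj d X (-1) = -X (-1) := by
  unfold pdsConj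
  rw [finsum_eq_single _ 0]
  · simp [gbinom_zero_right]
  · intro k hk
    have hcast : (-1 : ℤ) + k = ((k - 1 : ℕ) : ℤ) := by omega
    rw [hcast, gbinom_natCast_of_lt (by omega), zero_smul, smul_zero]

lemma pdsRes_add_pdsConj (d : A → A) (X : ℤ → A) : pdsRes (X + pdsConj d X) = 0 := by
  simp [pdsRes, pdsConj_neg_one]

theorem res_add_conj_mem_range_d_general (d : Derivation ℤ A A) (X : ℤ → A) :
    pdsRes (X + pdsConj (⇑d) X) ∈ Set.range (⇑d) :=
  ⟨0, by rw [map_zero, pdsRes_add_pdsConj]⟩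

/-- for any scalar formal pseudo-differential series `X`,
`res(X + X⁺)` is a total derivative. -/
theorem res_add_conj_mem_range_d (d : Derivation ℤ A A) (X : ℤ → A) (hX : PDSBdd X) :
    pdsRes (X + pdsConj (⇑d) X) ∈ Set.range (⇑d) :=
  res_add_conj_mem_range_d_general d X

end
end

section
/- For any two scalar formal pseudo-differential series A and B over a differential ring, the residue of the commutator [A,B] = AB − BA is a total derivative: res([A,B]) ∈ Im D. -/
/-!
Formal pseudo-differential series over a commutative differential ring `(A, d)`.
A series `X = ∑_{i ≤ N} a_i D^i` is represented by its coefficient function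
`ℤ → A` (the coefficient of `D^i`), with support bounded above.

The residue of `X ∘ Y` is `∑_{i, k} C(i, k) X_i d^k(Y_{k-1-i})`. The involution
`(i, k) ↦ (k - 1 - i, k)` matches it with the sum for `Y ∘ X`, and `C(k - 1 - i, k) = (-1)^k C(i, k)`,
so termwise the difference is `C(i, k) (a d^k b - (-1)^k b d^k a)` with `a = X_i`, `b = Y_{k-1-i}`.
Iterated integration by parts writes this as `d` of `C(i, k) ∑_{r < k} (-1)^r d^r a d^{k-1-r} b`,
and bounded supports leave only finitely many nonzero terms.
-/

noncomputable section

variable {A : Type*} [CommRing A]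

/-- Powers of a pseudo-differential series. -/
def pdsPow (d : A → A) (X : ℤ → A) : ℕ → ℤ → A
  | 0 => pdsOne
  | n + 1 => pdsMul d (pdsPow d X n) X

open Finset Function

theorem gbinom_eq_choose (n : ℤ) (k : ℕ) : gbinom n k = Ring.choose n k := by
  rw [gbinom, Polynomial.eval_eq_smeval, Ring.descPochhammer_eq_factorial_smul_choose,
    nsmul_eq_mul, Int.mul_ediv_cancel_left _ (by positivity)]

theorem gbinom_sub_one_sub (i : ℤ) (k : ℕ) : gbinom (k - 1 - i) k = (-1) ^ k * gbinom i k := by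
  have h := Ring.choose_neg (i - k + 1) k
  rw [show -(i - k + 1) = (k : ℤ) - 1 - i by ring, show i - k + 1 + k - 1 = i by ring] at h
  rw [gbinom_eq_choose, gbinom_eq_choose, h, Units.smul_def, Int.coe_negOnePow_natCast,
    smul_eq_mul]

theorem Derivation.mul_iterate_sub_neg_one_pow_smul_mul_iterate {R : Type*} [CommSemiring R]
    [Algebra R A] (d : Derivation R A A) (a b : A) (k : ℕ) :
    a * d^[k] b - (-1 : ℤ) ^ k • (b * d^[k] a) =
      d (∑ r ∈ range k, (-1 : ℤ) ^ r • (d^[r] a * d^[k - 1 - r] b)) := by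
  set f : ℕ → A := fun r => (-1 : ℤ) ^ r • (d^[r] a * d^[k - r] b)
  have hstep : ∀ r ∈ range k,
      d ((-1 : ℤ) ^ r • (d^[r] a * d^[k - 1 - r] b)) = f r - f (r + 1) := by
    intro r hr
    have hkr : k - r = k - 1 - r + 1 := by have := mem_range.mp hr; omega
    rw [map_zsmul]
    simp only [f, Derivation.leibniz, smul_eq_mul, hkr, iterate_succ_apply',
      show k - (r + 1) = k - 1 - r by omega, zsmul_eq_mul]
    push_cast
    ring
  rw [map_sum, sum_congr rfl hstep, sum_range_sub']
  simp only [f, pow_zero, one_smul, iterate_zero_apply, Nat.sub_zero, Nat.sub_self, mul_comm]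

/-- In `X i D^i ∘ Y j D^j` the Leibniz term `C(i, k) d^k D^{i + j - k}` lands on `D^{-1}` exactly
when `j = k - 1 - i`. -/
def resTerm (d : A → A) (X Y : ℤ → A) (p : ℤ × ℕ) : A :=
  gbinom p.1 p.2 • (X p.1 * d^[p.2] (Y (p.2 - 1 - p.1)))

def resPrimitive (d : A → A) (X Y : ℤ → A) (p : ℤ × ℕ) : A :=
  gbinom p.1 p.2 •
    ∑ r ∈ range p.2, (-1 : ℤ) ^ r • (d^[r] (X p.1) * d^[p.2 - 1 - r] (Y (p.2 - 1 - p.1)))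

def resSwap : Equiv.Perm (ℤ × ℕ) :=
  Involutive.toPerm (fun p => ((p.2 : ℤ) - 1 - p.1, p.2)) fun p => by simp

theorem resSwap_apply (p : ℤ × ℕ) : resSwap p = ((p.2 : ℤ) - 1 - p.1, p.2) := rfl

theorem pdsRes_pdsMul (d : A → A) (X Y : ℤ → A) :
    pdsRes (pdsMul d X Y) = ∑ᶠ p, resTerm d X Y p := by
  refine finsum_congr fun p => ?_
  rw [resTerm, show (p.2 : ℤ) - 1 - p.1 = -1 - p.1 + p.2 by ring]

theorem resTerm_resSwap (d : A → A) (X Y : ℤ → A) (p : ℤ × ℕ) :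
    resTerm d Y X (resSwap p) =
      (-1 : ℤ) ^ p.2 • gbinom p.1 p.2 • (Y (p.2 - 1 - p.1) * d^[p.2] (X p.1)) := by
  rw [resSwap_apply, resTerm, gbinom_sub_one_sub, mul_smul, sub_sub_cancel]

theorem resTerm_sub_resTerm_resSwap (d : Derivation ℤ A A) (X Y : ℤ → A) (p : ℤ × ℕ) :
    resTerm d X Y p - resTerm d Y X (resSwap p) = d (resPrimitive d X Y p) := by
  rw [resTerm_resSwap, smul_comm, resTerm, ← smul_sub,
    Derivation.mul_iterate_sub_neg_one_pow_smul_mul_iterate, resPrimitive, map_zsmul]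

theorem PDSBdd.finite_setOf_ne_zero {X Y : ℤ → A} (hX : PDSBdd X) (hY : PDSBdd Y) :
    {p : ℤ × ℕ | X p.1 ≠ 0 ∧ Y (p.2 - 1 - p.1) ≠ 0}.Finite := by
  obtain ⟨NX, hNX⟩ := hX
  obtain ⟨NY, hNY⟩ := hY
  refine ((Set.finite_Icc (-1 - NY) NX).prod (Set.finite_Iic (NX + NY + 1).toNat)).subset ?_
  rintro ⟨i, k⟩ ⟨hi, hk⟩
  have hi' : i ≤ NX := not_lt.mp (mt (hNX i) hi)
  have hk' : (k : ℤ) - 1 - i ≤ NY := not_lt.mp (mt (hNY _) hk)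
  simp only [Set.mem_prod, Set.mem_Icc, Set.mem_Iic]
  omega

theorem resTerm_hasFiniteSupport {F : Type*} [FunLike F A A] [ZeroHomClass F A A] (d : F)
    {X Y : ℤ → A} (hX : PDSBdd X) (hY : PDSBdd Y) : (resTerm d X Y).HasFiniteSupport := by
  refine (hX.finite_setOf_ne_zero hY).subset fun p hp => ⟨fun hx => hp ?_, fun hy => hp ?_⟩
  · simp [resTerm, hx]
  · simp [resTerm, hy, iterate_map_zero]

theorem resPrimitive_hasFiniteSupport {F : Type*} [FunLike F A A] [ZeroHomClass F A A] (d : F)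
    {X Y : ℤ → A} (hX : PDSBdd X) (hY : PDSBdd Y) : (resPrimitive d X Y).HasFiniteSupport := by
  refine (hX.finite_setOf_ne_zero hY).subset fun p hp => ⟨fun hx => hp ?_, fun hy => hp ?_⟩
  · simp [resPrimitive, hx, iterate_map_zero]
  · simp [resPrimitive, hy, iterate_map_zero]

/-- the residue of a commutator of pseudo-differential series
is a total derivative (Adler's trace property). -/
theorem res_commutator_mem_range_d (d : Derivation ℤ A A) (X Y : ℤ → A)
    (hX : PDSBdd X) (hY : PDSBdd Y) :
    pdsRes (pdsMul (⇑d) X Y - pdsMul (⇑d) Y X) ∈ Set.range (⇑d) := by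
  refine ⟨∑ᶠ p, resPrimitive d X Y p, ?_⟩
  have hswap : (fun p => resTerm d Y X (resSwap p)).HasFiniteSupport :=
    (resTerm_hasFiniteSupport d hY hX).fun_comp_of_injective resSwap.injective
  calc d (∑ᶠ p, resPrimitive d X Y p)
      = ∑ᶠ p, (resTerm d X Y p - resTerm d Y X (resSwap p)) := by
        rw [map_finsum d (resPrimitive_hasFiniteSupport d hX hY)]
        exact finsum_congr fun p => (resTerm_sub_resTerm_resSwap d X Y p).symm
    _ = ∑ᶠ p, resTerm d X Y p - ∑ᶠ p, resTerm d Y X p := by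
        rw [finsum_sub_distrib (resTerm_hasFiniteSupport d hX hY) hswap,
          finsum_comp_equiv resSwap]
    _ = pdsRes (pdsMul d X Y - pdsMul d Y X) := by
        rw [← pdsRes_pdsMul, ← pdsRes_pdsMul]; rfl

end
end

section
/- For the Boussinesq system u_t = v, v_t = u4 + 2 u1 u2, the function ρ = u1 v is a conserved density: D_t(u1 v) = D( ½ v² + u1 u3 − ½ u2² + (2/3) u1³ ). -/
/-! Both sides equal `v v₁ + u₁ u₄ + 2 u₁² u₂`; on the flux side the terms `± u₂ u₃` cancel. -/

theorem Derivation.map_smul_pow_succ {A : Type*} [CommRing A] [Algebra ℚ A]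
    (D : Derivation ℚ A A) (c : ℚ) (a : A) (n : ℕ) :
    D (c • a ^ (n + 1)) = (c * (n + 1)) • (a ^ n * D a) := by
  rw [D.map_smul, D.leibniz_pow, Nat.add_sub_cancel, smul_eq_mul, mul_smul,
    ← Nat.cast_smul_eq_nsmul ℚ, Nat.cast_add_one]

/-- for the Boussinesq system `u_t = v, v_t = u₄ + 2 u₁ u₂`
(formulated in a ring `A` of differential polynomials in the jet variables
`u i`, `v i`, with total `x`-derivative `D` and total `t`-derivative `Dt`),
the function `ρ = u₁ v` is a conserved density:
`D_t(u₁ v) = D(½ v² + u₁ u₃ − ½ u₂² + (2/3) u₁³)`. -/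
theorem boussinesq_conserved_density_u1v
    {A : Type*} [CommRing A] [Algebra ℚ A]
    (D Dt : Derivation ℚ A A) (u v : ℕ → A)
    (hDu : ∀ i, D (u i) = u (i + 1)) (hDv : ∀ i, D (v i) = v (i + 1))
    (hDtu : ∀ i, Dt (u i) = v i)
    (hDtv : ∀ i, Dt (v i) = (⇑D)^[i] (u 4 + 2 * u 1 * u 2)) :
    Dt (u 1 * v 0)
      = D ((1/2 : ℚ) • (v 0) ^ 2 + u 1 * u 3 - (1/2 : ℚ) • (u 2) ^ 2
          + (2/3 : ℚ) • (u 1) ^ 3) := by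
  have hdensity : Dt (u 1 * v 0) = v 0 * v 1 + u 1 * u 4 + 2 * u 1 ^ 2 * u 2 := by
    rw [Dt.leibniz, hDtu, hDtv, Function.iterate_zero_apply, smul_eq_mul, smul_eq_mul]
    ring
  have hflux : D ((1/2 : ℚ) • (v 0) ^ 2 + u 1 * u 3 - (1/2 : ℚ) • (u 2) ^ 2
      + (2/3 : ℚ) • (u 1) ^ 3) = v 0 * v 1 + u 1 * u 4 + 2 * u 1 ^ 2 * u 2 := by
    simp only [map_add, map_sub, D.map_smul_pow_succ, D.leibniz, hDu, hDv, smul_eq_mul]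
    norm_num [ofNat_smul_eq_nsmul]
    ring
  rw [hdensity, hflux]
end

section
/- For the system u_t = v, v_t = u4 + 2 u2 v + 2 u1² u2, both ρ₁ = v + u1² and ρ₂ = (2/3) u1³ + 2 u1 v are conserved densities; explicitly D_t ρ₁ = D( u3 + 2 u1 v + (2/3) u1³ ) and D_t ρ₂ = D( v² + 2 u1 u3 − u2² + 2 u1² v + u1⁴ ). -/
namespace Derivation

section Semiring

variable {R A : Type*} [CommSemiring R] [CommSemiring A] [Algebra R A] (d : Derivation R A A)

theorem map_ofNat (n : ℕ) [n.AtLeastTwo] : d (ofNat(n) : A) = 0 := by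
  rw [← Nat.cast_ofNat, map_natCast]

theorem leibniz_mul (x y : A) : d (x * y) = d x * y + x * d y := by
  rw [leibniz, smul_eq_mul, smul_eq_mul]
  ring

theorem leibniz_pow' (x : A) (n : ℕ) : d (x ^ n) = n * x ^ (n - 1) * d x := by
  rw [leibniz_pow, nsmul_eq_mul, smul_eq_mul, mul_assoc]

end Semiring

theorem map_twoThirds_smul_cube {A : Type*} [CommRing A] [Algebra ℚ A] (d : Derivation ℚ A A)
    (x : A) : d ((2 / 3 : ℚ) • x ^ 3) = 2 * x ^ 2 * d x := by
  rw [map_smul, leibniz_pow, ← Nat.cast_smul_eq_nsmul ℚ, smul_smul, smul_eq_mul]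
  norm_num [two_smul]
  ring

end Derivation

section

variable {A : Type*} [CommRing A] [Algebra ℚ A] {D Dt : Derivation ℚ A A} {u v : ℕ → A}

theorem first_density_conserved
    (hDu : ∀ i, D (u i) = u (i + 1)) (hDv : ∀ i, D (v i) = v (i + 1))
    (hDtu : ∀ i, Dt (u i) = v i)
    (hDtv : Dt (v 0) = u 4 + 2 * u 2 * v 0 + 2 * (u 1) ^ 2 * u 2) :
    Dt (v 0 + (u 1) ^ 2) = D (u 3 + 2 * u 1 * v 0 + (2/3 : ℚ) • (u 1) ^ 3) := by
  simp only [map_add, Derivation.leibniz_mul, Derivation.leibniz_pow', Derivation.map_ofNat,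
    Derivation.map_twoThirds_smul_cube, hDu, hDv, hDtu, hDtv]
  ring

theorem second_density_conserved
    (hDu : ∀ i, D (u i) = u (i + 1)) (hDv : ∀ i, D (v i) = v (i + 1))
    (hDtu : ∀ i, Dt (u i) = v i)
    (hDtv : Dt (v 0) = u 4 + 2 * u 2 * v 0 + 2 * (u 1) ^ 2 * u 2) :
    Dt ((2/3 : ℚ) • (u 1) ^ 3 + 2 * u 1 * v 0)
      = D ((v 0) ^ 2 + 2 * u 1 * u 3 - (u 2) ^ 2 + 2 * (u 1) ^ 2 * v 0 + (u 1) ^ 4) := by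
  simp only [map_add, map_sub, Derivation.leibniz_mul, Derivation.leibniz_pow',
    Derivation.map_ofNat, Derivation.map_twoThirds_smul_cube, hDu, hDv, hDtu, hDtv]
  ring

end

/-- for the system `u_t = v, v_t = u₄ + 2 u₂ v + 2 u₁² u₂`, both
`ρ₁ = v + u₁²` and `ρ₂ = (2/3) u₁³ + 2 u₁ v` are conserved densities:
`D_t ρ₁ = D(u₃ + 2 u₁ v + (2/3) u₁³)` and
`D_t ρ₂ = D(v² + 2 u₁ u₃ − u₂² + 2 u₁² v + u₁⁴)`. -/
theorem gu3_conserved_densities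
    {A : Type*} [CommRing A] [Algebra ℚ A]
    (D Dt : Derivation ℚ A A) (u v : ℕ → A)
    (hDu : ∀ i, D (u i) = u (i + 1)) (hDv : ∀ i, D (v i) = v (i + 1))
    (hDtu : ∀ i, Dt (u i) = v i)
    (hDtv : ∀ i, Dt (v i) =
      (⇑D)^[i] (u 4 + 2 * u 2 * v 0 + 2 * (u 1) ^ 2 * u 2)) :
    Dt (v 0 + (u 1) ^ 2) = D (u 3 + 2 * u 1 * v 0 + (2/3 : ℚ) • (u 1) ^ 3) ∧
    Dt ((2/3 : ℚ) • (u 1) ^ 3 + 2 * u 1 * v 0)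
      = D ((v 0) ^ 2 + 2 * u 1 * u 3 - (u 2) ^ 2 + 2 * (u 1) ^ 2 * v 0
          + (u 1) ^ 4) :=
  ⟨first_density_conserved hDu hDv hDtu (hDtv 0),
    second_density_conserved hDu hDv hDtu (hDtv 0)⟩
end

section
/- For the system u_t = v, v_t = u4 + u2², both ρ₁ = u2 v1 and ρ₂ = v1² − u3² + (2/3) u2³ are conserved densities; explicitly D_t ρ₁ = D( ½ v1² + u2 u4 − ½ u3² + (2/3) u2³ ) and D_t ρ₂ = D( 2 u4 v1 − 2 u3 v2 + 2 u2² v1 ). -/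
/-!
Both identities are finite computations with the Leibniz rule. The only piece of the flow that
enters beyond `D_t u_i = v_i` is `D_t v₁ = D(u₄ + u₂²) = u₅ + 2 u₂ u₃`; substituting it, both
sides become the same polynomial in the jet variables.
-/

@[simp]
lemma Derivation.map_ofNat_s11 {R A M : Type*} [CommSemiring R] [CommSemiring A] [AddCommMonoid M]
    [Algebra R A] [Module A M] [Module R M] (D : Derivation R A M) (n : ℕ) [n.AtLeastTwo] :
    D (ofNat(n) : A) = 0 := by
  rw [← Nat.cast_ofNat, D.map_natCast]

namespace Gu1

variable {A : Type*} [CommRing A] [Algebra ℚ A] {D Dt : Derivation ℚ A A} {u v : ℕ → A}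

lemma dt_v_one (hDu : ∀ i, D (u i) = u (i + 1))
    (hDtv : ∀ i, Dt (v i) = (⇑D)^[i] (u 4 + u 2 ^ 2)) :
    Dt (v 1) = u 5 + 2 * u 2 * u 3 := by
  simp only [hDtv, Function.iterate_one, map_add, Derivation.leibniz_pow, hDu, smul_eq_mul]
  algebra

lemma dt_first_density (hDu : ∀ i, D (u i) = u (i + 1)) (hDv : ∀ i, D (v i) = v (i + 1))
    (hDtu : ∀ i, Dt (u i) = v i) (hDtv₁ : Dt (v 1) = u 5 + 2 * u 2 * u 3) :
    Dt (u 2 * v 1) = D ((1/2 : ℚ) • v 1 ^ 2 + u 2 * u 4 - (1/2 : ℚ) • u 3 ^ 2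
      + (2/3 : ℚ) • u 2 ^ 3) := by
  simp only [map_add, map_sub, Derivation.map_smul, Derivation.leibniz, Derivation.leibniz_pow,
    hDu, hDv, hDtu, hDtv₁, smul_eq_mul]
  algebra

lemma dt_second_density (hDu : ∀ i, D (u i) = u (i + 1)) (hDv : ∀ i, D (v i) = v (i + 1))
    (hDtu : ∀ i, Dt (u i) = v i) (hDtv₁ : Dt (v 1) = u 5 + 2 * u 2 * u 3) :
    Dt (v 1 ^ 2 - u 3 ^ 2 + (2/3 : ℚ) • u 2 ^ 3)
      = D (2 * u 4 * v 1 - 2 * u 3 * v 2 + 2 * u 2 ^ 2 * v 1) := by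
  simp only [map_add, map_sub, Derivation.map_smul, Derivation.leibniz, Derivation.leibniz_pow,
    Derivation.map_ofNat_s11, hDu, hDv, hDtu, hDtv₁, smul_eq_mul]
  algebra

end Gu1

/-- for the system `u_t = v, v_t = u₄ + u₂²`, both `ρ₁ = u₂ v₁`
and `ρ₂ = v₁² − u₃² + (2/3) u₂³` are conserved densities:
`D_t ρ₁ = D(½ v₁² + u₂ u₄ − ½ u₃² + (2/3) u₂³)` and
`D_t ρ₂ = D(2 u₄ v₁ − 2 u₃ v₂ + 2 u₂² v₁)`. -/
theorem gu1_conserved_densities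
    {A : Type*} [CommRing A] [Algebra ℚ A]
    (D Dt : Derivation ℚ A A) (u v : ℕ → A)
    (hDu : ∀ i, D (u i) = u (i + 1)) (hDv : ∀ i, D (v i) = v (i + 1))
    (hDtu : ∀ i, Dt (u i) = v i)
    (hDtv : ∀ i, Dt (v i) = (⇑D)^[i] (u 4 + (u 2) ^ 2)) :
    Dt (u 2 * v 1)
      = D ((1/2 : ℚ) • (v 1) ^ 2 + u 2 * u 4 - (1/2 : ℚ) • (u 3) ^ 2
          + (2/3 : ℚ) • (u 2) ^ 3) ∧
    Dt ((v 1) ^ 2 - (u 3) ^ 2 + (2/3 : ℚ) • (u 2) ^ 3)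
      = D (2 * u 4 * v 1 - 2 * u 3 * v 2 + 2 * (u 2) ^ 2 * v 1) := by
  have hDtv₁ := Gu1.dt_v_one hDu hDtv
  exact ⟨Gu1.dt_first_density hDu hDv hDtu hDtv₁, Gu1.dt_second_density hDu hDv hDtu hDtv₁⟩
end

section
/- The system u_t = v, v_t = u4 + 4 u1 v1 + 2 u2 v − 6 u1² u2 is Hamiltonian with operator H₁ = [[0, 1], [−1, 4 u1 D + 2 u2]] and Hamiltonian density H = ½ v² − ½ u2² − ½ u1⁴: that is, δH/δv = v and −δH/δu + (4 u1 D + 2 u2)(δH/δv) = u4 + 4 u1 v1 + 2 u2 v − 6 u1² u2. -/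
section JetDerivation

variable {R A : Type*} [CommSemiring R] [CommRing A] [Algebra R A] (D : Derivation R A A)

theorem Derivation.iterate_neg_two (a : A) : (fun a => -(D a))^[2] a = D (D a) := by
  simp only [Function.iterate_succ, Function.iterate_zero, Function.comp_apply, id, map_neg,
    neg_neg]

theorem Derivation.map_natCast_mul (n : ℕ) (a : A) : D (n * a) = n * D a := by
  rw [Derivation.leibniz, Derivation.map_natCast, smul_zero, add_zero, smul_eq_mul]

variable {D} {u : ℕ → A}

theorem Derivation.map_jet_pow (hD : ∀ i, D (u i) = u (i + 1)) (i n : ℕ) :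
    D (u i ^ n) = n * u i ^ (n - 1) * u (i + 1) := by
  rw [Derivation.leibniz_pow, hD, nsmul_eq_mul, smul_eq_mul, mul_assoc]

end JetDerivation

/-- the system `u_t = v, v_t = u₄ + 4 u₁ v₁ + 2 u₂ v − 6 u₁² u₂`
is Hamiltonian with operator `H₁ = [[0, 1], [−1, 4 u₁ D + 2 u₂]]` and density
`H = ½ v² − ½ u₂² − ½ u₁⁴`: with variational derivatives
`δH/δv = ∑ (−D)^i ∂H/∂v_i = v` (since `∂H/∂v₀ = v`) and
`δH/δu = ∑ (−D)^i ∂H/∂u_i` (since `∂H/∂u₁ = −2u₁³`, `∂H/∂u₂ = −u₂`),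
one has `δH/δv = v` and
`−δH/δu + (4 u₁ D + 2 u₂)(δH/δv) = u₄ + 4 u₁ v₁ + 2 u₂ v − 6 u₁² u₂`. -/
theorem gu4_hamiltonian_form
    {A : Type*} [CommRing A] [Algebra ℚ A]
    (D : Derivation ℚ A A) (u v : ℕ → A)
    (hDu : ∀ i, D (u i) = u (i + 1)) (hDv : ∀ i, D (v i) = v (i + 1)) :
    (fun a => -(D a))^[0] (v 0) = v 0 ∧
    -((fun a => -(D a))^[1] (-(2 * (u 1) ^ 3)) + (fun a => -(D a))^[2] (-(u 2)))
        + (4 * u 1 * D (v 0) + 2 * u 2 * v 0)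
      = u 4 + 4 * u 1 * v 1 + 2 * u 2 * v 0 - 6 * (u 1) ^ 2 * u 2 := by
  refine ⟨rfl, ?_⟩
  have hu1_cubed : D (2 * u 1 ^ 3) = 6 * u 1 ^ 2 * u 2 := by
    rw [show (2 : A) = (2 : ℕ) by norm_num, D.map_natCast_mul, Derivation.map_jet_pow hDu]
    push_cast
    ring
  have hu2 : D (D (u 2)) = u 4 := by rw [hDu, hDu]
  rw [Function.iterate_one, D.iterate_neg_two, map_neg, map_neg, map_neg, hu1_cubed, hu2, hDv]
  ring
end

section
/- For the system u_t = v, v_t = F with F = u4 + 4 u1 v1 + 2 u2 v − 6 u1² u2, the matrix operator S = [[4 u1 D + 2 u2, −1], [1, 0]] is a symplectic operator: it satisfies S_t + S Φ_* + Φ_*⁺ S = 0, where Φ_* = [[0, 1], [U, V]] with U = Σ_{i=0}^{4}(∂F/∂u_i) D^i and V = 4 u1 D + 2 u2, S_t = [[4 v1 D + 2 v2, 0], [0, 0]], and ⁺ denotes matrix transposition combined with formal conjugation of entries. -/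
/-!
Matrix differential operators over a differential ring `(A, D)`.
A (scalar) differential operator `P = ∑_n P_n D^n` is represented by its
coefficient function `ℕ → A` (with finite support in all instances below).
Composition is induced by the Leibniz rule `D^i ∘ a = ∑_k C(i,k) D^k(a) D^{i-k}`,
and the formal conjugate is `P⁺ = ∑_n (−D)^n ∘ P_n`.
-/

noncomputable section

variable {A : Type*} [CommRing A]

/-- Coefficients of the composition of two differential operators. -/
def opComp (d : A → A) (P Q : ℕ → A) : ℕ → A := fun n =>
  ∑ᶠ p : ℕ × ℕ, if p.1 ≤ n + p.2 then
    (p.1.choose p.2 : ℤ) • (P p.1 * d^[p.2] (Q (n + p.2 - p.1))) else 0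

/-- Coefficients of the formal conjugate `P⁺ = ∑ (−D)^i ∘ P_i`. -/
def opConj (d : A → A) (P : ℕ → A) : ℕ → A := fun n =>
  ∑ᶠ k : ℕ, ((-1 : ℤ) ^ (n + k) * ((n + k).choose k : ℤ)) • d^[k] (P (n + k))


lemma iter_zero (d : A → A) (hd : d 0 = 0) (k : ℕ) : d^[k] 0 = 0 :=
  Function.iterate_fixed hd k

lemma opComp_expand (d : A → A) (P Q : ℕ → A) (hP : ∀ m, 4 < m → P m = 0) (n : ℕ) :
    opComp d P Q n = ∑ i ∈ Finset.range 5, ∑ k ∈ Finset.range 5,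
      (if i ≤ n + k then (i.choose k : ℤ) • (P i * d^[k] (Q (n + k - i))) else 0) := by
  have hsupp : Function.support (fun p : ℕ × ℕ => if p.1 ≤ n + p.2 then
      (p.1.choose p.2 : ℤ) • (P p.1 * d^[p.2] (Q (n + p.2 - p.1))) else 0) ⊆
      ↑(Finset.range 5 ×ˢ Finset.range 5) := by
    intro p hp
    simp only [Function.mem_support] at hp
    simp only [Finset.coe_product, Set.mem_prod, Finset.mem_coe, Finset.mem_range]
    constructor
    · by_contra h
      push_neg at h
      have : P p.1 = 0 := hP p.1 (by omega)
      simp [this] at hp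
    · by_contra h
      push_neg at h
      rcases le_or_gt p.1 4 with h1 | h1
      · have : p.1.choose p.2 = 0 := Nat.choose_eq_zero_of_lt (by omega)
        simp [this] at hp
      · have : P p.1 = 0 := hP p.1 h1
        simp [this] at hp
  rw [opComp, finsum_eq_sum_of_support_subset _ hsupp, Finset.sum_product]

lemma opComp_vanish (d : A → A) (hd : d 0 = 0) (P Q : ℕ → A) (a b : ℕ)
    (hP : ∀ m, a < m → P m = 0) (hQ : ∀ m, b < m → Q m = 0)
    (n : ℕ) (hn : a + b < n) : opComp d P Q n = 0 := by
  apply finsum_eq_zero_of_forall_eq_zero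
  rintro ⟨i, k⟩
  simp only
  rcases le_or_gt i (n + k) with h | h
  · rw [if_pos h]
    rcases le_or_gt i a with hi | hi
    · rcases le_or_gt k i with hk | hk
      · have : Q (n + k - i) = 0 := hQ _ (by omega)
        rw [this, iter_zero d hd, mul_zero, smul_zero]
      · rw [Nat.choose_eq_zero_of_lt hk]
        simp
    · rw [hP i hi, zero_mul, smul_zero]
  · rw [if_neg (by omega)]

lemma opConj_expand (d : A → A) (hd : d 0 = 0) (P : ℕ → A)
    (hP : ∀ m, 4 < m → P m = 0) (n : ℕ) :
    opConj d P n = ∑ k ∈ Finset.range 5,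
      ((-1 : ℤ) ^ (n + k) * ((n + k).choose k : ℤ)) • d^[k] (P (n + k)) := by
  rw [opConj]
  apply finsum_eq_sum_of_support_subset
  intro k hk
  simp only [Function.mem_support] at hk
  simp only [Finset.mem_coe, Finset.mem_range]
  by_contra h
  push_neg at h
  have : P (n + k) = 0 := hP _ (by omega)
  rw [this, iter_zero d hd, smul_zero] at hk
  exact hk rfl

lemma opConj_vanish (d : A → A) (hd : d 0 = 0) (P : ℕ → A) (a : ℕ)
    (hP : ∀ m, a < m → P m = 0) (n : ℕ) (hn : a < n) : opConj d P n = 0 := by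
  apply finsum_eq_zero_of_forall_eq_zero
  intro k
  rw [hP (n + k) (by omega), iter_zero d hd, smul_zero]

lemma D_ofNat (D : Derivation ℤ A A) (n : ℕ) [n.AtLeastTwo] :
    D (OfNat.ofNat n : A) = 0 := by
  have : (OfNat.ofNat n : A) = algebraMap ℤ A (OfNat.ofNat n) := by simp
  rw [this, Derivation.map_algebraMap]

lemma D_two (D : Derivation ℤ A A) : D (2 : A) = 0 := D_ofNat D 2
lemma D_four (D : Derivation ℤ A A) : D (4 : A) = 0 := D_ofNat D 4
lemma D_six (D : Derivation ℤ A A) : D (6 : A) = 0 := D_ofNat D 6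
lemma D_twelve (D : Derivation ℤ A A) : D (12 : A) = 0 := D_ofNat D 12


/-- Composition of `2 × 2` matrices of differential operators. -/
def matComp (d : A → A) (M N : Fin 2 → Fin 2 → ℕ → A) :
    Fin 2 → Fin 2 → ℕ → A := fun i j n =>
  opComp d (M i 0) (N 0 j) n + opComp d (M i 1) (N 1 j) n

/-- Conjugate of a matrix of differential operators: transposition combined
with formal conjugation of the entries. -/
def matConjT (d : A → A) (M : Fin 2 → Fin 2 → ℕ → A) :
    Fin 2 → Fin 2 → ℕ → A := fun i j => opConj d (M j i)

set_option maxHeartbeats 10000000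

/-- for the system `u_t = v, v_t = F` with
`F = u₄ + 4 u₁ v₁ + 2 u₂ v − 6 u₁² u₂`, the matrix operator
`S = [[4 u₁ D + 2 u₂, −1], [1, 0]]` is symplectic: `S_t + S Φ_* + Φ_*⁺ S = 0`,
where `Φ_* = [[0, 1], [U, V]]` with `U = ∑_i (∂F/∂u_i) D^i`
(`∂F/∂u₁ = 4v₁ − 12u₁u₂`, `∂F/∂u₂ = 2v − 6u₁²`, `∂F/∂u₄ = 1`) and
`V = 4 u₁ D + 2 u₂`, and `S_t` is `D_t` applied coefficientwise. -/
theorem gu4_symplectic_operator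
    (D Dt : Derivation ℤ A A) (u v : ℕ → A)
    (hDu : ∀ i, D (u i) = u (i + 1)) (hDv : ∀ i, D (v i) = v (i + 1))
    (hDtu : ∀ i, Dt (u i) = v i)
    (hDtv : ∀ i, Dt (v i) =
      (⇑D)^[i] (u 4 + 4 * u 1 * v 1 + 2 * u 2 * v 0 - 6 * (u 1) ^ 2 * u 2))
    (S Φ : Fin 2 → Fin 2 → ℕ → A)
    (hS : S = ![![fun n => if n = 1 then 4 * u 1 else if n = 0 then 2 * u 2 else 0,
                  fun n => if n = 0 then (-1 : A) else 0],
                ![fun n => if n = 0 then (1 : A) else 0,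
                  fun _ => (0 : A)]])
    (hΦ : Φ = ![![fun _ => (0 : A),
                  fun n => if n = 0 then (1 : A) else 0],
                ![fun n => if n = 4 then (1 : A)
                      else if n = 2 then 2 * v 0 - 6 * (u 1) ^ 2
                      else if n = 1 then 4 * v 1 - 12 * u 1 * u 2 else 0,
                  fun n => if n = 1 then 4 * u 1 else if n = 0 then 2 * u 2 else 0]]) :
    ∀ (i j : Fin 2) (n : ℕ),
      Dt (S i j n) + matComp (⇑D) S Φ i j n + matComp (⇑D) (matConjT (⇑D) Φ) S i j n
        = 0 := by
  subst hS hΦ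
  have hd : (⇑D) 0 = 0 := map_zero D
  have bU : ∀ m, 4 < m → (fun n => if n = 4 then (1 : A) else if n = 2 then 2 * v 0 - 6 * (u 1) ^ 2 else if n = 1 then 4 * v 1 - 12 * u 1 * u 2 else 0) m = 0 := by
    intro m hm; beta_reduce; split_ifs <;> first | rfl | omega | exact False.elim ‹False›
  have bV : ∀ m, 4 < m → (fun n => if n = 1 then 4 * u 1 else if n = 0 then 2 * u 2 else 0) m = 0 := by
    intro m hm; beta_reduce; split_ifs <;> first | rfl | omega | exact False.elim ‹False›
  have bOne : ∀ m, 4 < m → (fun n => if n = 0 then (1 : A) else 0) m = 0 := by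
    intro m hm; beta_reduce; split_ifs <;> first | rfl | omega | exact False.elim ‹False›
  have bV1 : ∀ m, 1 < m → (fun n => if n = 1 then 4 * u 1 else if n = 0 then 2 * u 2 else 0) m = 0 := by
    intro m hm; beta_reduce; split_ifs <;> first | rfl | omega | exact False.elim ‹False›
  have bOne0 : ∀ m, 0 < m → (fun n => if n = 0 then (1 : A) else 0) m = 0 := by
    intro m hm; beta_reduce; split_ifs <;> first | rfl | omega | exact False.elim ‹False›
  have bZero : ∀ m, 4 < m → (fun _ : ℕ => (0 : A)) m = 0 := by
    intro m hm; rfl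
  have cU : opConj ⇑D (fun n => if n = 4 then (1 : A) else if n = 2 then 2 * v 0 - 6 * (u 1) ^ 2 else if n = 1 then 4 * v 1 - 12 * u 1 * u 2 else 0) = (fun n => if n = 4 then (1 : A) else if n = 2 then 2 * v 0 - 6 * (u 1) ^ 2 else if n = 1 then -(12 * u 1 * u 2) else if n = 0 then -(2 * v 2) else 0) := by
    funext n
    rcases n with _ | _ | _ | _ | _ | n
    · rw [opConj_expand ⇑D hd _ bU]
      norm_num [Finset.sum_range_succ, Finset.sum_range_zero, Nat.choose_succ_succ, Function.iterate_succ_apply', Derivation.leibniz, smul_eq_mul, zsmul_eq_mul, D_two D, D_four D, D_six D, D_twelve D, D_two Dt, D_four Dt, D_six Dt, D_twelve Dt, hDu, hDv, hDtu, pow_two, map_sub, map_zero, Derivation.map_one_eq_zero]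
      try ring
    · rw [opConj_expand ⇑D hd _ bU]
      norm_num [Finset.sum_range_succ, Finset.sum_range_zero, Nat.choose_succ_succ, Function.iterate_succ_apply', Derivation.leibniz, smul_eq_mul, zsmul_eq_mul, D_two D, D_four D, D_six D, D_twelve D, D_two Dt, D_four Dt, D_six Dt, D_twelve Dt, hDu, hDv, hDtu, pow_two, map_sub, map_zero, Derivation.map_one_eq_zero]
      try ring
    · rw [opConj_expand ⇑D hd _ bU]
      norm_num [Finset.sum_range_succ, Finset.sum_range_zero, Nat.choose_succ_succ, Function.iterate_succ_apply', Derivation.leibniz, smul_eq_mul, zsmul_eq_mul, D_two D, D_four D, D_six D, D_twelve D, D_two Dt, D_four Dt, D_six Dt, D_twelve Dt, hDu, hDv, hDtu, pow_two, map_sub, map_zero, Derivation.map_one_eq_zero]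
      try ring
    · rw [opConj_expand ⇑D hd _ bU]
      norm_num [Finset.sum_range_succ, Finset.sum_range_zero, Nat.choose_succ_succ, Function.iterate_succ_apply', Derivation.leibniz, smul_eq_mul, zsmul_eq_mul, D_two D, D_four D, D_six D, D_twelve D, D_two Dt, D_four Dt, D_six Dt, D_twelve Dt, hDu, hDv, hDtu, pow_two, map_sub, map_zero, Derivation.map_one_eq_zero]
      try ring
    · rw [opConj_expand ⇑D hd _ bU]
      norm_num [Finset.sum_range_succ, Finset.sum_range_zero, Nat.choose_succ_succ, Function.iterate_succ_apply', Derivation.leibniz, smul_eq_mul, zsmul_eq_mul, D_two D, D_four D, D_six D, D_twelve D, D_two Dt, D_four Dt, D_six Dt, D_twelve Dt, hDu, hDv, hDtu, pow_two, map_sub, map_zero, Derivation.map_one_eq_zero]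
      try ring
    · rw [opConj_vanish ⇑D hd _ 4 bU _ ?_]
      · beta_reduce; split_ifs <;> first | rfl | omega | exact False.elim ‹False›
      · omega
  have cV : opConj ⇑D (fun n => if n = 1 then 4 * u 1 else if n = 0 then 2 * u 2 else 0) = (fun n => if n = 1 then -(4 * u 1) else if n = 0 then -(2 * u 2) else 0) := by
    funext n
    rcases n with _ | _ | n
    · rw [opConj_expand ⇑D hd _ bV]
      norm_num [Finset.sum_range_succ, Finset.sum_range_zero, Nat.choose_succ_succ, Function.iterate_succ_apply', Derivation.leibniz, smul_eq_mul, zsmul_eq_mul, D_two D, D_four D, D_six D, D_twelve D, D_two Dt, D_four Dt, D_six Dt, D_twelve Dt, hDu, hDv, hDtu, pow_two, map_sub, map_zero, Derivation.map_one_eq_zero]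
      try ring
    · rw [opConj_expand ⇑D hd _ bV]
      norm_num [Finset.sum_range_succ, Finset.sum_range_zero, Nat.choose_succ_succ, Function.iterate_succ_apply', Derivation.leibniz, smul_eq_mul, zsmul_eq_mul, D_two D, D_four D, D_six D, D_twelve D, D_two Dt, D_four Dt, D_six Dt, D_twelve Dt, hDu, hDv, hDtu, pow_two, map_sub, map_zero, Derivation.map_one_eq_zero]
      try ring
    · rw [opConj_vanish ⇑D hd _ 1 bV1 _ ?_]
      · beta_reduce; split_ifs <;> first | rfl | omega | exact False.elim ‹False›
      · omega
  have cOne : opConj ⇑D (fun n => if n = 0 then (1 : A) else 0) = (fun n => if n = 0 then (1 : A) else 0) := by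
    funext n
    rcases n with _ | n
    · rw [opConj_expand ⇑D hd _ bOne]
      norm_num [Finset.sum_range_succ, Finset.sum_range_zero, Nat.choose_succ_succ, Function.iterate_succ_apply', Derivation.leibniz, smul_eq_mul, zsmul_eq_mul, D_two D, D_four D, D_six D, D_twelve D, D_two Dt, D_four Dt, D_six Dt, D_twelve Dt, hDu, hDv, hDtu, pow_two, map_sub, map_zero, Derivation.map_one_eq_zero]
      try ring
    · rw [opConj_vanish ⇑D hd _ 0 bOne0 _ ?_]
      · beta_reduce; split_ifs <;> first | rfl | omega | exact False.elim ‹False›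
      · omega
  have cZero : opConj ⇑D (fun _ : ℕ => (0 : A)) = (fun _ : ℕ => (0 : A)) := by
    funext n
    exact finsum_eq_zero_of_forall_eq_zero (fun k => by
      simp [iter_zero ⇑D hd])
  intro i j n
  rcases Nat.lt_or_ge n 6 with hn | hn
  · interval_cases n <;> fin_cases i <;> fin_cases j <;>
      simp only [matComp, matConjT, Matrix.cons_val', Matrix.cons_val_zero,
        Matrix.cons_val_one, Matrix.head_cons, Matrix.head_fin_const,
        Matrix.empty_val', Matrix.cons_val_fin_one, Fin.isValue, Fin.mk_zero, Fin.mk_one,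
        cU, cV, cOne, cZero] <;>
      (rw [opComp_expand ⇑D _ _ ?_, opComp_expand ⇑D _ _ ?_,
           opComp_expand ⇑D _ _ ?_, opComp_expand ⇑D _ _ ?_]
       · norm_num [Finset.sum_range_succ, Finset.sum_range_zero, Nat.choose_succ_succ, Function.iterate_succ_apply', Derivation.leibniz, smul_eq_mul, zsmul_eq_mul, D_two D, D_four D, D_six D, D_twelve D, D_two Dt, D_four Dt, D_six Dt, D_twelve Dt, hDu, hDv, hDtu, pow_two, map_sub, map_zero, Derivation.map_one_eq_zero]
         try ring
       all_goals (intro m hm; beta_reduce; first | rfl | (split_ifs <;> first | rfl | omega | exact False.elim ‹False›)))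
  · obtain ⟨m', rfl⟩ : ∃ m', n = m' + 6 := ⟨n - 6, by omega⟩
    fin_cases i <;> fin_cases j <;>
      simp only [matComp, matConjT, Matrix.cons_val', Matrix.cons_val_zero,
        Matrix.cons_val_one, Matrix.head_cons, Matrix.head_fin_const,
        Matrix.empty_val', Matrix.cons_val_fin_one, Fin.isValue, Fin.mk_zero, Fin.mk_one,
        cU, cV, cOne, cZero] <;>
      (rw [opComp_vanish ⇑D hd _ _ 1 4 ?_ ?_ _ ?_,
           opComp_vanish ⇑D hd _ _ 0 4 ?_ ?_ _ ?_,
           opComp_vanish ⇑D hd _ _ 4 1 ?_ ?_ _ ?_,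
           opComp_vanish ⇑D hd _ _ 4 1 ?_ ?_ _ ?_]
       · first
          | (split_ifs <;> first | omega | exact False.elim ‹False› | (simp; done))
          | (simp; done)
       all_goals first
        | omega
        | (intro m hm; beta_reduce; first | rfl | (split_ifs <;> first | rfl | omega | exact False.elim ‹False›)))


end
end
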